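/- With φ the inverse Zhukovskii function on D = ℂ̂ \ [−1,1] (normalized φ(z)/z → 2 at ∞) and real parameters A_1<B_1<⋯<A_k<B_k<−1, 1<A_{k+1}<⋯<A_m<B_m, the function w(z) = ∏_{j=1}^m ((A_j − 1/φ(z))/(B_j − 1/φ(z)))^{1/2} admits a single-valued holomorphic branch on D, and its value at ∞ equals ∏_{j=1}^m √(A_j/B_j) > 0 for an appropriate choice of branch. -/

import Mathlib

/-! Writing `φ z = z + s z`, the relation `s² = z² - 1` gives `φ z · (z - s z) = 1`, so
`z = (φ z + (φ z)⁻¹) / 2`. On the unit circle `w⁻¹ = conj w`, hence `‖φ z‖ = 1` would force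
`z ∈ [-1, 1]`. As `‖φ‖ → ∞` at `∞` and `ℂ \ [-1, 1]` is connected, `‖φ‖ > 1` on all of it.
So `1/φ` lies in the unit disc, and for real `a, b` on the same side of `[-1, 1]` both
`a - 1/φ` and `b - 1/φ` lie in the same open half-plane `±Re > 0`; their quotient avoids
`(-∞, 0]` and the principal square roots of the factors give the branch. -/

open Filter Bornology Topology

/-- The segment `E = [-1,1]` viewed inside `ℂ`. -/
noncomputable def segE : Set ℂ := (fun x : ℝ => (x : ℂ)) '' Set.Icc (-1) 1

lemma mem_segE_iff {z : ℂ} : z ∈ segE ↔ z.im = 0 ∧ -1 ≤ z.re ∧ z.re ≤ 1 := by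
  constructor
  · rintro ⟨x, hx, rfl⟩
    simpa using hx
  · rintro ⟨h0, h1, h2⟩
    exact ⟨z.re, ⟨h1, h2⟩, by simp [Complex.ext_iff, h0.symm]⟩

lemma ne_zero_of_mem_compl_segE {z : ℂ} (hz : z ∈ segEᶜ) : z ≠ 0 := by
  rintro rfl
  exact hz (mem_segE_iff.mpr (by norm_num))

lemma compl_segE_eq :
    segEᶜ = (({z : ℂ | 0 < z.im} ∪ {z | 1 < z.re}) ∪ {z | z.im < 0}) ∪ {z | z.re < -1} := by
  ext z
  simp only [Set.mem_compl_iff, mem_segE_iff, Set.mem_union, Set.mem_ofPred_eq, not_and_or,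
    not_le, ← ne_eq, ne_iff_lt_or_gt]
  tauto

lemma isPreconnected_compl_segE : IsPreconnected segEᶜ := by
  rw [compl_segE_eq]
  refine ((((convex_halfSpace_im_gt 0).isPreconnected.union' ?_
    (convex_halfSpace_re_gt 1).isPreconnected).union' ?_
    (convex_halfSpace_im_lt 0).isPreconnected).union' ?_
    (convex_halfSpace_re_lt (-1)).isPreconnected)
  · exact ⟨2 + Complex.I, by norm_num⟩
  · exact ⟨2 - Complex.I, by norm_num⟩
  · exact ⟨-2 + Complex.I, by norm_num⟩

lemma compl_segE_mem_cobounded : segEᶜ ∈ cobounded ℂ :=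
  isBounded_def.mp (isCompact_Icc.image Complex.continuous_ofReal).isBounded

lemma neBot_cobounded_inf_compl_segE : (cobounded ℂ ⊓ 𝓟 segEᶜ).NeBot := by
  rw [inf_eq_left.mpr (le_principal_iff.mpr compl_segE_mem_cobounded)]
  infer_instance

lemma joukowski_mem_segE {w : ℂ} (hw : ‖w‖ = 1) : (w + w⁻¹) / 2 ∈ segE := by
  have hinv : w⁻¹ = starRingEnd ℂ w := by
    rw [Complex.inv_def, Complex.normSq_eq_norm_sq, hw]
    simp
  refine ⟨w.re, abs_le.mp (hw ▸ Complex.abs_re_le_norm w), ?_⟩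
  rw [hinv, Complex.add_conj]
  push_cast
  ring

lemma inv_add_eq_sub_of_sq_eq {z w : ℂ} (h : w ^ 2 = z ^ 2 - 1) : (z + w)⁻¹ = z - w :=
  inv_eq_of_mul_eq_one_right (by linear_combination -h)

lemma norm_add_ne_one_of_sq_eq {z w : ℂ} (h : w ^ 2 = z ^ 2 - 1) (hz : z ∈ segEᶜ) :
    ‖z + w‖ ≠ 1 := by
  intro h1
  apply hz
  have hz_eq : (z + w + (z + w)⁻¹) / 2 = z := by
    rw [inv_add_eq_sub_of_sq_eq h]
    ring
  exact hz_eq ▸ joukowski_mem_segE h1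

section InverseJoukowski

variable {s : ℂ → ℂ}

lemma tendsto_add_cobounded (hnorm : Tendsto (fun z => s z / z) (cobounded ℂ ⊓ 𝓟 segEᶜ) (𝓝 1)) :
    Tendsto (fun z => z + s z) (cobounded ℂ ⊓ 𝓟 segEᶜ) (cobounded ℂ) := by
  rw [← tendsto_norm_atTop_iff_cobounded]
  have hfactor : Tendsto (fun z => ‖1 + s z / z‖) (cobounded ℂ ⊓ 𝓟 segEᶜ) (𝓝 2) := by
    simpa [one_add_one_eq_two] using ((tendsto_const_nhds (x := (1 : ℂ))).add hnorm).norm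
  refine ((tendsto_norm_cobounded_atTop.mono_left inf_le_left).atTop_mul_pos two_pos
    hfactor).congr' (eventually_inf_principal.mpr (Eventually.of_forall fun z hz => ?_))
  rw [← norm_mul, mul_add, mul_div_cancel₀ _ (ne_zero_of_mem_compl_segE hz), mul_one]

lemma one_lt_norm_add (hs : DifferentiableOn ℂ s segEᶜ)
    (hsq : ∀ z ∈ segEᶜ, s z ^ 2 = z ^ 2 - 1)
    (hnorm : Tendsto (fun z => s z / z) (cobounded ℂ ⊓ 𝓟 segEᶜ) (𝓝 1))
    {z : ℂ} (hz : z ∈ segEᶜ) : 1 < ‖z + s z‖ := by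
  by_contra! hle
  have := neBot_cobounded_inf_compl_segE
  have hfar : ∀ᶠ x in cobounded ℂ ⊓ 𝓟 segEᶜ, 1 ≤ ‖x + s x‖ :=
    (tendsto_norm_cobounded_atTop.comp (tendsto_add_cobounded hnorm)).eventually_ge_atTop 1
  obtain ⟨x, hx, hx1⟩ := isPreconnected_compl_segE.intermediate_value₂_eventually₁ hz
    inf_le_right (continuousOn_id.add hs.continuousOn).norm continuousOn_const hle hfar
  exact norm_add_ne_one_of_sq_eq (hsq x hx) hx hx1

end InverseJoukowski

lemma div_mem_slitPlane_of_re_pos {u v : ℂ} (hu : 0 < u.re) (hv : 0 < v.re) :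
    u / v ∈ Complex.slitPlane := by
  rw [Complex.mem_slitPlane_iff, or_iff_not_imp_right, not_not]
  intro him
  have hv0 : v ≠ 0 := fun h => by simp [h] at hv
  have hre : u.re = (u / v).re * v.re := by
    simpa [Complex.mul_re, him] using congrArg Complex.re (div_mul_cancel₀ u hv0).symm
  exact pos_of_mul_pos_left (hre ▸ hu) hv.le

lemma sub_div_sub_mem_slitPlane {a b : ℝ} {u : ℂ} (hab : (1 < a ∧ 1 < b) ∨ (a < -1 ∧ b < -1))
    (hu : ‖u‖ < 1) : ((a : ℂ) - u) / ((b : ℂ) - u) ∈ Complex.slitPlane := by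
  have hre := abs_lt.mp ((Complex.abs_re_le_norm u).trans_lt hu)
  rcases hab with ⟨ha, hb⟩ | ⟨ha, hb⟩
  · exact div_mem_slitPlane_of_re_pos (by simp; linarith) (by simp; linarith)
  · rw [← neg_div_neg_eq]
    exact div_mem_slitPlane_of_re_pos (by simp; linarith) (by simp; linarith)

lemma exists_sqrt_prod_of_mem_slitPlane {ι : Type*} [Fintype ι] {U : Set ℂ} {l : Filter ℂ}
    {F : ι → ℂ → ℂ} (hF : ∀ j, DifferentiableOn ℂ (F j) U)
    (hslit : ∀ j, ∀ z ∈ U, F j z ∈ Complex.slitPlane) {c : ι → ℝ} (hc : ∀ j, 0 < c j)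
    (hlim : ∀ j, Tendsto (F j) l (𝓝 (c j))) :
    ∃ w : ℂ → ℂ, DifferentiableOn ℂ w U ∧ (∀ z ∈ U, w z ^ 2 = ∏ j, F j z) ∧
      Tendsto w l (𝓝 ((∏ j, √(c j) : ℝ) : ℂ)) := by
  refine ⟨fun z => ∏ j, F j z ^ (2⁻¹ : ℂ), ?_, fun z _ => ?_, ?_⟩
  · exact DifferentiableOn.fun_finsetProd fun j _ => (hF j).cpow_const (hslit j)
  · simp [← Finset.prod_pow]
  · push_cast
    refine tendsto_finsetProd _ fun j _ => ?_
    have hsqrt : ((√(c j) : ℝ) : ℂ) = (c j : ℂ) ^ (2⁻¹ : ℂ) := by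
      rw [Real.sqrt_eq_rpow, Complex.ofReal_cpow (hc j).le]
      norm_num
    rw [hsqrt]
    exact (hlim j).cpow tendsto_const_nhds (Complex.ofReal_mem_slitPlane.mpr (hc j))

theorem holomorphic_branch_of_w_general
    (s : ℂ → ℂ)
    (hs : DifferentiableOn ℂ s segEᶜ)
    (hsq : ∀ z ∈ segEᶜ, s z ^ 2 = z ^ 2 - 1)
    (hnorm : Tendsto (fun z => s z / z) (cobounded ℂ ⊓ 𝓟 segEᶜ) (nhds 1))
    (m k : ℕ) (A B : Fin m → ℝ)
    (hAB : ∀ j, A j < B j)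
    (hneg : ∀ j : Fin m, (j : ℕ) < k → B j < -1)
    (hpos : ∀ j : Fin m, k ≤ (j : ℕ) → 1 < A j) :
    0 < ∏ j, Real.sqrt (A j / B j) ∧
    ∃ w : ℂ → ℂ,
      DifferentiableOn ℂ w segEᶜ ∧
      (∀ z ∈ segEᶜ,
        w z ^ 2 = ∏ j, (((A j : ℂ) - 1 / (z + s z)) / ((B j : ℂ) - 1 / (z + s z)))) ∧
      Tendsto w (cobounded ℂ ⊓ 𝓟 segEᶜ)
        (nhds ((∏ j, Real.sqrt (A j / B j) : ℝ) : ℂ)) := by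
  have hside : ∀ j, (1 < A j ∧ 1 < B j) ∨ (A j < -1 ∧ B j < -1) := fun j =>
    (le_or_gt k j).imp (fun h => ⟨hpos j h, (hpos j h).trans (hAB j)⟩)
      (fun h => ⟨(hAB j).trans (hneg j h), hneg j h⟩)
  have hratio : ∀ j, 0 < A j / B j := fun j => (hside j).elim
    (fun h => div_pos (by linarith) (by linarith))
    (fun h => div_pos_of_neg_of_neg (by linarith) (by linarith))
  refine ⟨Finset.prod_pos fun j _ => Real.sqrt_pos.mpr (hratio j), ?_⟩
  have hφ : ∀ z ∈ segEᶜ, 1 < ‖z + s z‖ := fun z hz => one_lt_norm_add hs hsq hnorm hz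
  have hψ_lt : ∀ z ∈ segEᶜ, ‖1 / (z + s z)‖ < 1 := fun z hz => by
    simpa only [one_div, norm_inv] using inv_lt_one_of_one_lt₀ (hφ z hz)
  have hψ : DifferentiableOn ℂ (fun z => 1 / (z + s z)) segEᶜ :=
    (differentiableOn_const 1).div (differentiableOn_id.add hs)
      fun z hz => norm_pos_iff.mp (one_pos.trans (hφ z hz))
  have hψ_lim : Tendsto (fun z => 1 / (z + s z)) (cobounded ℂ ⊓ 𝓟 segEᶜ) (𝓝 0) := by
    simpa only [one_div, Function.comp_def] using
      tendsto_inv₀_cobounded.comp (tendsto_add_cobounded hnorm)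
  have hslit := fun j z (hz : z ∈ segEᶜ) => sub_div_sub_mem_slitPlane (hside j) (hψ_lt z hz)
  refine exists_sqrt_prod_of_mem_slitPlane (fun j => ?_) hslit hratio fun j => ?_
  · -- a vanishing denominator would make the quotient `0 ∉ slitPlane`
    exact ((differentiableOn_const _).sub hψ).div ((differentiableOn_const _).sub hψ)
      fun z hz h0 => Complex.slitPlane_ne_zero (hslit j z hz) (by rw [h0, div_zero])
  · have hB : (B j : ℂ) - 0 ≠ 0 := by
      rw [sub_zero, Complex.ofReal_ne_zero]
      rcases hside j with h | h <;> linarith [h.2]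
    have hlim := (hψ_lim.const_sub (A j : ℂ)).div (hψ_lim.const_sub (B j : ℂ)) hB
    rw [sub_zero, sub_zero] at hlim
    push_cast
    exact hlim

/-- with `φ = z + s z` the inverse Zhukovskii function on
`D = ℂ \ [-1,1]` and interlacing real parameters `A_j, B_j` outside `[-1,1]`,
the function `w(z) = ∏_j ((A_j - 1/φ(z))/(B_j - 1/φ(z)))^{1/2}` has a single-valued
holomorphic branch on `D` whose value at `∞` (as a limit) is
`∏_j √(A_j/B_j) > 0`. -/
theorem holomorphic_branch_of_w
    (s : ℂ → ℂ)
    (hs : DifferentiableOn ℂ s segEᶜ)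
    (hsq : ∀ z ∈ segEᶜ, s z ^ 2 = z ^ 2 - 1)
    (hnorm : Tendsto (fun z => s z / z) (cobounded ℂ ⊓ 𝓟 segEᶜ) (nhds 1))
    (m k : ℕ) (hkm : k ≤ m) (A B : Fin m → ℝ)
    (hAB : ∀ j, A j < B j)
    (hord : ∀ i j : Fin m, i < j → B i < A j)
    (hneg : ∀ j : Fin m, (j : ℕ) < k → B j < -1)
    (hpos : ∀ j : Fin m, k ≤ (j : ℕ) → 1 < A j) :
    0 < ∏ j, Real.sqrt (A j / B j) ∧
    ∃ w : ℂ → ℂ,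
      DifferentiableOn ℂ w segEᶜ ∧
      (∀ z ∈ segEᶜ,
        w z ^ 2 = ∏ j, (((A j : ℂ) - 1 / (z + s z)) / ((B j : ℂ) - 1 / (z + s z)))) ∧
      Tendsto w (cobounded ℂ ⊓ 𝓟 segEᶜ)
        (nhds ((∏ j, Real.sqrt (A j / B j) : ℝ) : ℂ)) :=
  holomorphic_branch_of_w_general s hs hsq hnorm m k A B hAB hneg hpos
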